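/- arXiv:math/0208052 — 2 statements merged into one kernel-verified Lean document; each statement's English description precedes it below -/
import Mathlib

section
/- The invariant ring ℂ[Z₁,…,Z_n]^{A_1(n)} is generated as a ℂ-algebra by the elements Z₁², Z₂², …, Z_n² and Z₁Z₂⋯Z_n. -/
open MvPolynomial

noncomputable def signAction (n : ℕ) (ε : Fin n → ℂ) :
    MvPolynomial (Fin n) ℂ →ₐ[ℂ] MvPolynomial (Fin n) ℂ :=
  aeval (fun i => C (ε i) * X i)

noncomputable def invariantSubalgebra (n : ℕ) : Subalgebra ℂ (MvPolynomial (Fin n) ℂ) :=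
  ⨅ (ε : Fin n → ℂ) (_ : ∀ i, ε i ^ 2 = 1) (_ : (∏ i, ε i) = 1),
    AlgHom.equalizer (signAction n ε) (AlgHom.id ℂ (MvPolynomial (Fin n) ℂ))

lemma mem_invariant_iff {n : ℕ} {p : MvPolynomial (Fin n) ℂ} :
    p ∈ invariantSubalgebra n ↔
      ∀ ε : Fin n → ℂ, (∀ i, ε i ^ 2 = 1) → (∏ i, ε i) = 1 → signAction n ε p = p := by
  simp only [invariantSubalgebra, Algebra.mem_iInf, AlgHom.mem_equalizer, AlgHom.id_apply]

lemma prod_X_pow_univ {n : ℕ} (d : Fin n →₀ ℕ) :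
    (∏ i, (X i : MvPolynomial (Fin n) ℂ) ^ d i) = monomial d 1 := by
  rw [← prod_X_pow_eq_monomial]
  symm
  apply Finset.prod_subset (Finset.subset_univ _)
  intro i _ hi
  simp [Finsupp.notMem_support_iff.mp hi]

lemma signAction_monomial {n : ℕ} (ε : Fin n → ℂ) (d : Fin n →₀ ℕ) (c : ℂ) :
    signAction n ε (monomial d c) = monomial d (c * ∏ i, ε i ^ d i) := by
  have h1 : ∀ c' : ℂ, (monomial d c' : MvPolynomial (Fin n) ℂ)
      = C c' * ∏ i, X i ^ d i := by
    intro c'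
    rw [prod_X_pow_univ, C_mul_monomial, mul_one]
  rw [h1, h1, map_mul, map_prod]
  simp only [signAction, map_pow, aeval_X, mul_pow]
  simp only [← C_pow]
  rw [Finset.prod_mul_distrib, ← map_prod, ← mul_assoc]
  simp only [aeval_C, algebraMap_eq, ← C_mul]

lemma coeff_signAction {n : ℕ} (ε : Fin n → ℂ) (p : MvPolynomial (Fin n) ℂ)
    (d : Fin n →₀ ℕ) :
    coeff d (signAction n ε p) = (∏ i, ε i ^ d i) * coeff d p := by
  conv_lhs => rw [p.as_sum, map_sum]
  rw [coeff_sum]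
  simp only [signAction_monomial, coeff_monomial]
  rw [Finset.sum_ite_eq' p.support d (fun d' => coeff d' p * ∏ i, ε i ^ d' i)]
  by_cases hd : d ∈ p.support
  · simp [hd, mul_comm]
  · simp only [hd, if_false]
    rw [MvPolynomial.notMem_support_iff.mp hd, mul_zero]

lemma parity_eq {n : ℕ} {p : MvPolynomial (Fin n) ℂ} (hp : p ∈ invariantSubalgebra n)
    {d : Fin n →₀ ℕ} (hd : d ∈ p.support) (i j : Fin n) (_hij : i ≠ j) :
    d i % 2 = d j % 2 := by
  set ε : Fin n → ℂ := fun k => (if k = i then (-1 : ℂ) else 1) * (if k = j then -1 else 1)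
    with hε
  have h2 : ∀ k, ε k ^ 2 = 1 := by
    intro k
    simp only [hε]
    split_ifs <;> norm_num
  have hprod : (∏ k, ε k) = 1 := by
    simp only [hε]
    rw [Finset.prod_mul_distrib, Finset.prod_ite_eq', Finset.prod_ite_eq']
    norm_num
  have hfix := mem_invariant_iff.mp hp ε h2 hprod
  have hco : coeff d p ≠ 0 := MvPolynomial.mem_support_iff.mp hd
  have hcoeff : (∏ k, ε k ^ d k) * coeff d p = coeff d p := by
    rw [← coeff_signAction, hfix]
  have hone : (∏ k, ε k ^ d k) = 1 :=
    mul_right_cancel₀ hco (by rw [hcoeff, one_mul])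
  have hval : (∏ k, ε k ^ d k) = (-1 : ℂ) ^ d i * (-1 : ℂ) ^ d j := by
    simp only [hε, mul_pow]
    rw [Finset.prod_mul_distrib]
    have e1 : ∀ k : Fin n, (if k = i then (-1:ℂ) else 1) ^ d k
        = if k = i then (-1:ℂ) ^ d k else 1 := by
      intro k; split_ifs <;> simp
    have e2 : ∀ k : Fin n, (if k = j then (-1:ℂ) else 1) ^ d k
        = if k = j then (-1:ℂ) ^ d k else 1 := by
      intro k; split_ifs <;> simp
    simp only [e1, e2]
    rw [Finset.prod_ite_eq', Finset.prod_ite_eq']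
    simp
  rw [hval, ← pow_add] at hone
  have heven : Even (d i + d j) := by
    have hne : (-1 : ℂ) ≠ 1 := by norm_num
    exact (neg_one_pow_eq_one_iff_even hne).mp hone
  have h3 := Nat.even_add.mp heven
  rw [Nat.even_iff, Nat.even_iff] at h3
  omega

lemma monomial_mem_adjoin {n : ℕ} (d : Fin n →₀ ℕ) (c : ℂ)
    (h : ∀ i j, d i % 2 = d j % 2) :
    monomial d c ∈ Algebra.adjoin ℂ
      ({p | ∃ i, p = (X i : MvPolynomial (Fin n) ℂ) ^ 2}
        ∪ {∏ i, (X i : MvPolynomial (Fin n) ℂ)}) := by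
  set A := Algebra.adjoin ℂ
      ({p | ∃ i, p = (X i : MvPolynomial (Fin n) ℂ) ^ 2}
        ∪ {∏ i, (X i : MvPolynomial (Fin n) ℂ)}) with hA
  have hsq : ∀ i : Fin n, (X i : MvPolynomial (Fin n) ℂ) ^ 2 ∈ A :=
    fun i => Algebra.subset_adjoin (Or.inl ⟨i, rfl⟩)
  have hprodX : (∏ i, (X i : MvPolynomial (Fin n) ℂ)) ∈ A :=
    Algebra.subset_adjoin (Or.inr rfl)
  have key : (∏ i, (X i : MvPolynomial (Fin n) ℂ) ^ d i) ∈ A := by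
    by_cases hev : ∀ i, d i % 2 = 0
    · have : ∀ i ∈ Finset.univ, (X i : MvPolynomial (Fin n) ℂ) ^ d i
          = (X i ^ 2) ^ (d i / 2) := by
        intro i _; have h1 := hev i; rw [← pow_mul]; congr 1; omega
      rw [Finset.prod_congr rfl this]
      exact Subalgebra.prod_mem A fun i _ => Subalgebra.pow_mem A (hsq i) _
    · push_neg at hev
      obtain ⟨i₀, hi₀⟩ := hev
      have hodd : ∀ i, d i % 2 = 1 := by
        intro i
        have := h i i₀
        omega
      have : ∀ i ∈ Finset.univ, (X i : MvPolynomial (Fin n) ℂ) ^ d i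
          = (X i ^ 2) ^ (d i / 2) * X i := by
        intro i _; rw [← pow_mul, ← pow_succ]; congr 1; have := hodd i; omega
      rw [Finset.prod_congr rfl this, Finset.prod_mul_distrib]
      exact Subalgebra.mul_mem A
        (Subalgebra.prod_mem A fun i _ => Subalgebra.pow_mem A (hsq i) _) hprodX
  have : monomial d c = C c * ∏ i, (X i : MvPolynomial (Fin n) ℂ) ^ d i := by
    rw [prod_X_pow_univ, C_mul_monomial, mul_one]
  rw [this]
  exact Subalgebra.mul_mem A (Subalgebra.algebraMap_mem A c) key

/-- the invariant ring `ℂ[Z₁,…,Zₙ]^{A₁(n)}` is generated as a `ℂ`-algebra by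
`Z₁², …, Zₙ²` and `Z₁ Z₂ ⋯ Zₙ`. -/
theorem invariant_ring_generators (n : ℕ) :
    Algebra.adjoin ℂ
      ({p | ∃ i, p = (X i : MvPolynomial (Fin n) ℂ) ^ 2} ∪ {∏ i, (X i : MvPolynomial (Fin n) ℂ)})
      = invariantSubalgebra n := by
  apply le_antisymm
  · rw [Algebra.adjoin_le_iff]
    rintro p (⟨i, rfl⟩ | rfl)
    · rw [SetLike.mem_coe, mem_invariant_iff]
      intro ε h2 _
      rw [map_pow]
      have : signAction n ε (X i) = C (ε i) * X i := aeval_X _ i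
      rw [this, mul_pow, ← C_pow, h2 i, C_1, one_mul]
    · rw [SetLike.mem_coe, mem_invariant_iff]
      intro ε _ hprod
      rw [map_prod]
      have : ∀ i ∈ Finset.univ, signAction n ε (X i) = C (ε i) * X i :=
        fun i _ => aeval_X _ i
      rw [Finset.prod_congr rfl this, Finset.prod_mul_distrib, ← map_prod, hprod, C_1, one_mul]
  · intro p hp
    rw [p.as_sum]
    apply Subalgebra.sum_mem
    intro d hd
    apply monomial_mem_adjoin
    intro i j
    by_cases hij : i = j
    · rw [hij]
    · exact parity_eq hp hd i j hij
end

section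
/- In ℝ^n (n ≥ 3), the convex hull of the points {v^{ij} := ½(e^i+e^j) : 1 ≤ i < j ≤ n} equals {x ∈ Δ : x_i ≤ ½ for all i}, and for each j, the convex hull of {e^j} ∪ {v^{ij} : i ≠ j} equals {x ∈ Δ : x_j ≥ ½}, where Δ = {x ∈ ℝ^n_{≥0} : ∑x_i = 1}. -/
/-!
Both sets are compact convex polytopes. The second is the image of the standard simplex under
the homothety of ratio `1/2` centred at `eʲ`, which sends `eʲ` to itself and `eⁱ` to `v^{ij}`,
so its description follows from `Δ = conv {eⁱ}`. For the first, by Krein–Milman it suffices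
to show that every extreme point is some `v^{ij}`: two coordinates strictly between `0` and `1/2`
can be moved in opposite directions, and a single one is impossible because the others, each
`0` or `1/2`, would sum to `1` minus a number in `(0, 1/2)`. So an extreme point has
coordinates in `{0, 1/2}` summing to `1`, i.e. exactly two equal to `1/2`.
-/

open Finset

theorem convexHull_eq_of_extremePoints_subset {E : Type*} [AddCommGroup E] [Module ℝ E]
    [TopologicalSpace E] [T2Space E] [IsTopologicalAddGroup E] [ContinuousSMul ℝ E]
    [LocallyConvexSpace ℝ E] {s t : Set E} (hs : IsCompact s) (hsc : Convex ℝ s)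
    (ht : t.Finite) (hts : t ⊆ s) (hext : s.extremePoints ℝ ⊆ t) : convexHull ℝ t = s := by
  refine (convexHull_min hts hsc).antisymm ?_
  calc s = closure (convexHull ℝ (s.extremePoints ℝ)) :=
        (closure_convexHull_extremePoints hs hsc).symm
    _ ⊆ closure (convexHull ℝ t) := closure_mono (convexHull_mono hext)
    _ = convexHull ℝ t := (ht.isClosed_convexHull ℝ).closure_eq

theorem sum_eq_card_filter_mul {ι : Type*} {s : Finset ι} {x : ι → ℝ} {c : ℝ}
    (hx : ∀ i ∈ s, x i = 0 ∨ x i = c) : ∑ i ∈ s, x i = #{i ∈ s | x i = c} * c := by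
  rw [← nsmul_eq_mul, ← sum_const, sum_filter]
  refine sum_congr rfl fun i hi => ?_
  rcases hx i hi with h | h <;> simp [h]

noncomputable def pairMidpoint {ι : Type*} [DecidableEq ι] (a b : ι) : ι → ℝ :=
  fun k => if k = a ∨ k = b then 1/2 else 0

def cappedSimplex (ι : Type*) [Fintype ι] (c : ℝ) : Set (ι → ℝ) :=
  stdSimplex ℝ ι ∩ Set.Iic fun _ => c

namespace cappedSimplex

variable {ι : Type*} [Fintype ι]

theorem convex (c : ℝ) : Convex ℝ (cappedSimplex ι c) :=
  (convex_stdSimplex ℝ ι).inter (convex_Iic _)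

theorem isCompact (c : ℝ) : IsCompact (cappedSimplex ι c) :=
  (isCompact_stdSimplex ℝ ι).inter_right isClosed_Iic

theorem add_single_sub_single_mem [DecidableEq ι] {c t : ℝ} {x : ι → ℝ}
    (hx : x ∈ cappedSimplex ι c) {a b : ι} (hab : a ≠ b) (ht : 0 ≤ t) (hta : t ≤ c - x a)
    (htb : t ≤ x b) : x + (Pi.single a t - Pi.single b t) ∈ cappedSimplex ι c := by
  obtain ⟨⟨hx0, hx1⟩, hxc⟩ := hx
  refine ⟨⟨fun i => ?_, ?_⟩, fun i => ?_⟩ <;> simp only [Pi.add_apply, Pi.sub_apply]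
  · rcases eq_or_ne i a with rfl | hia
    · rw [Pi.single_eq_same, Pi.single_eq_of_ne hab]; linarith [hx0 i]
    rcases eq_or_ne i b with rfl | hib
    · rw [Pi.single_eq_of_ne hia, Pi.single_eq_same]; linarith
    rw [Pi.single_eq_of_ne hia, Pi.single_eq_of_ne hib]; linarith [hx0 i]
  · simp [sum_add_distrib, hx1]
  · rcases eq_or_ne i a with rfl | hia
    · rw [Pi.single_eq_same, Pi.single_eq_of_ne hab]; linarith
    rcases eq_or_ne i b with rfl | hib
    · rw [Pi.single_eq_of_ne hia, Pi.single_eq_same]; linarith [hxc i]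
    rw [Pi.single_eq_of_ne hia, Pi.single_eq_of_ne hib]; linarith [hxc i]

theorem notMem_extremePoints [DecidableEq ι] {c : ℝ} {x : ι → ℝ} {a b : ι}
    (hab : a ≠ b) (ha : x a ∈ Set.Ioo 0 c) (hb : x b ∈ Set.Ioo 0 c) :
    x ∉ (cappedSimplex ι c).extremePoints ℝ := by
  intro hx
  set t := min (min (x a) (c - x a)) (min (x b) (c - x b))
  have ht : 0 < t := by
    simp only [t, lt_min_iff, sub_pos]
    exact ⟨⟨ha.1, ha.2⟩, hb.1, hb.2⟩
  set d : ι → ℝ := Pi.single a t - Pi.single b t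
  have hplus : x + d ∈ cappedSimplex ι c :=
    add_single_sub_single_mem hx.1 hab ht.le (by simp [t]) (by simp [t])
  have hminus : x - d ∈ cappedSimplex ι c := by
    rw [sub_eq_add_neg, neg_sub]
    exact add_single_sub_single_mem hx.1 hab.symm ht.le (by simp [t]) (by simp [t])
  have hseg : x ∈ openSegment ℝ (x + d) (x - d) :=
    ⟨1/2, 1/2, by norm_num, by norm_num, by norm_num, by module⟩
  have hd : d = 0 := add_eq_left.mp (hx.2 hplus hminus hseg)
  have hda := congrFun hd a
  simp only [d, Pi.sub_apply, Pi.single_eq_same, Pi.single_eq_of_ne hab, sub_zero,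
    Pi.zero_apply] at hda
  exact ht.ne' hda

theorem eq_zero_or_eq_half_of_mem_extremePoints {x : ι → ℝ}
    (hx : x ∈ (cappedSimplex ι (1/2)).extremePoints ℝ) (i : ι) : x i = 0 ∨ x i = 1/2 := by
  classical
  obtain ⟨⟨hx0, hx1⟩, hxc⟩ := hx.1
  by_contra! hi
  have hi' : x i ∈ Set.Ioo 0 (1/2) := ⟨(hx0 i).lt_of_ne' hi.1, (hxc i).lt_of_ne hi.2⟩
  obtain ⟨j, hji, hj⟩ : ∃ j ≠ i, x j ∈ Set.Ioo 0 (1/2) := by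
    by_contra! h
    have hrest : ∀ j ∈ univ.erase i, x j = 0 ∨ x j = 1/2 := fun j hj => by
      by_contra! h'
      exact h j (ne_of_mem_erase hj) ⟨(hx0 j).lt_of_ne' h'.1, (hxc j).lt_of_ne h'.2⟩
    have hsum := add_sum_erase univ x (mem_univ i)
    rw [sum_eq_card_filter_mul hrest, hx1] at hsum
    set m := #{j ∈ univ.erase i | x j = 1/2}
    have h1 : (1 : ℝ) < m := by linarith [hi'.2]
    have h2 : (m : ℝ) < 2 := by linarith [hi'.1]
    norm_cast at h1 h2
    omega
  exact notMem_extremePoints hji hj hi' hx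

variable [DecidableEq ι]

theorem pairMidpoint_mem {a b : ι} (hab : a ≠ b) : pairMidpoint a b ∈ cappedSimplex ι (1/2) := by
  refine ⟨⟨fun k => ?_, ?_⟩, fun k => ?_⟩
  · unfold pairMidpoint; split_ifs <;> norm_num
  · unfold pairMidpoint
    rw [← sum_filter, sum_const, filter_or, filter_eq', filter_eq']
    simp [card_pair hab]
  · unfold pairMidpoint; split_ifs <;> norm_num

theorem exists_eq_pairMidpoint_of_mem_extremePoints {x : ι → ℝ}
    (hx : x ∈ (cappedSimplex ι (1/2)).extremePoints ℝ) : ∃ a b, a ≠ b ∧ x = pairMidpoint a b := by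
  have hvals := eq_zero_or_eq_half_of_mem_extremePoints hx
  have hcard : #{i | x i = 1/2} = 2 := by
    have hsum := hx.1.1.2
    rw [sum_eq_card_filter_mul fun i _ => hvals i] at hsum
    exact_mod_cast (by linarith : (#{i | x i = 1/2} : ℝ) = 2)
  obtain ⟨a, b, hab, hhalf⟩ := card_eq_two.mp hcard
  refine ⟨a, b, hab, funext fun k => ?_⟩
  have hk : x k = 1/2 ↔ k = a ∨ k = b := by
    simpa using congrArg (k ∈ ·) hhalf
  rcases hvals k with h | h <;> simp [pairMidpoint, ← hk, h]

theorem convexHull_pairMidpoint :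
    convexHull ℝ {x | ∃ a b, a ≠ b ∧ x = pairMidpoint a b} = cappedSimplex ι (1/2) := by
  refine convexHull_eq_of_extremePoints_subset (isCompact _) (convex _) ?_ ?_
    fun x hx => exists_eq_pairMidpoint_of_mem_extremePoints hx
  · exact (Set.finite_range fun p : ι × ι => pairMidpoint p.1 p.2).subset
      (by rintro _ ⟨a, b, -, rfl⟩; exact ⟨(a, b), rfl⟩)
  · rintro _ ⟨a, b, hab, rfl⟩
    exact pairMidpoint_mem hab

end cappedSimplex

section Homothety

variable {ι : Type*} [DecidableEq ι]

theorem homothety_single_apply (j : ι) (r : ℝ) (y : ι → ℝ) (k : ι) :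
    AffineMap.homothety (Pi.single j 1 : ι → ℝ) r y k
      = r * y k + (1 - r) * (Pi.single j 1 : ι → ℝ) k := by
  simp only [AffineMap.homothety_apply, vsub_eq_sub, vadd_eq_add, Pi.add_apply, Pi.smul_apply,
    Pi.sub_apply, smul_eq_mul]
  ring

theorem homothety_single_half_single {i j : ι} (hij : i ≠ j) :
    AffineMap.homothety (Pi.single j 1 : ι → ℝ) (1/2 : ℝ) (Pi.single i 1) = pairMidpoint i j := by
  funext k
  rw [homothety_single_apply, pairMidpoint]
  rcases eq_or_ne k i with rfl | hki
  · simp [hij]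
  rcases eq_or_ne k j with rfl | hkj
  · norm_num [hki]
  simp [hki, hkj]

theorem homothety_single_half_image_range_single (j : ι) :
    AffineMap.homothety (Pi.single j 1 : ι → ℝ) (1/2 : ℝ) '' Set.range (fun i => Pi.single i 1)
      = {Pi.single j 1} ∪ {x | ∃ i, i ≠ j ∧ x = pairMidpoint i j} := by
  ext x
  simp only [← Set.range_comp, Set.mem_range, Function.comp_apply, Set.mem_union,
    Set.mem_singleton_iff, Set.mem_ofPred_eq]
  constructor
  · rintro ⟨i, rfl⟩
    rcases eq_or_ne i j with rfl | hij
    · exact Or.inl (AffineMap.homothety_apply_same _ _)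
    · exact Or.inr ⟨i, hij, homothety_single_half_single hij⟩
  · rintro (rfl | ⟨i, hij, rfl⟩)
    · exact ⟨j, AffineMap.homothety_apply_same _ _⟩
    · exact ⟨i, homothety_single_half_single hij⟩

variable [Fintype ι]

theorem homothety_single_half_image_stdSimplex (j : ι) :
    AffineMap.homothety (Pi.single j 1 : ι → ℝ) (1/2 : ℝ) '' stdSimplex ℝ ι
      = stdSimplex ℝ ι ∩ {x | 1/2 ≤ x j} := by
  ext x
  constructor
  · rintro ⟨y, ⟨hy0, hy1⟩, rfl⟩
    refine ⟨⟨fun k => ?_, ?_⟩, ?_⟩ <;>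
      simp only [Set.mem_ofPred_eq, homothety_single_apply]
    · rcases eq_or_ne k j with rfl | hk
      · simp only [Pi.single_eq_same, mul_one]; linarith [hy0 k]
      · simp [hk, hy0 k]
    · simp [sum_add_distrib, ← mul_sum, hy1]
    · simp only [Pi.single_eq_same, mul_one]; linarith [hy0 j]
  · rintro ⟨⟨hx0, hx1⟩, hxj : 1/2 ≤ x j⟩
    refine ⟨AffineMap.homothety (Pi.single j 1 : ι → ℝ) (2 : ℝ) x, ⟨fun k => ?_, ?_⟩, ?_⟩
    · rw [homothety_single_apply]
      rcases eq_or_ne k j with rfl | hk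
      · simp only [Pi.single_eq_same, mul_one]; linarith
      · simp [hk, hx0 k]
    · simp only [homothety_single_apply]
      simp [sum_add_distrib, ← mul_sum, hx1]
    · rw [← AffineMap.homothety_mul_apply]; norm_num

theorem convexHull_single_union_pairMidpoint (j : ι) :
    convexHull ℝ ({Pi.single j 1} ∪ {x | ∃ i, i ≠ j ∧ x = pairMidpoint i j})
      = stdSimplex ℝ ι ∩ {x | 1/2 ≤ x j} := by
  rw [← homothety_single_half_image_range_single, ← AffineMap.image_convexHull,
    convexHull_rangle_single_eq_stdSimplex, homothety_single_half_image_stdSimplex]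

end Homothety

theorem xi_decomposition_general (n : ℕ)
    (e : Fin n → (Fin n → ℝ)) (he : ∀ i, e i = fun k => if k = i then 1 else 0)
    (v : Fin n → Fin n → (Fin n → ℝ))
    (hv : ∀ i j, v i j = fun k => if k = i ∨ k = j then (1 : ℝ)/2 else 0) :
    (convexHull ℝ {x | ∃ i j : Fin n, i ≠ j ∧ x = v i j}
      = {x : Fin n → ℝ | (∀ i, 0 ≤ x i) ∧ (∑ i, x i) = 1 ∧ ∀ i, x i ≤ 1/2}) ∧
    (∀ j : Fin n, convexHull ℝ ({e j} ∪ {x | ∃ i : Fin n, i ≠ j ∧ x = v i j})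
      = {x : Fin n → ℝ | (∀ i, 0 ≤ x i) ∧ (∑ i, x i) = 1 ∧ 1/2 ≤ x j}) := by
  obtain rfl : e = fun i => Pi.single i 1 := funext fun i => by
    rw [he]; funext k; exact (Pi.single_apply i 1 k).symm
  obtain rfl : v = pairMidpoint := funext₂ hv
  exact ⟨cappedSimplex.convexHull_pairMidpoint.trans (Set.ext fun _ => and_assoc),
    fun j => (convexHull_single_union_pairMidpoint j).trans (Set.ext fun _ => and_assoc)⟩

/-- in `ℝⁿ` (`n ≥ 3`), the convex hull of the midpoints `v^{ij} = ½(eⁱ+eʲ)`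
equals `{x ∈ Δ : xᵢ ≤ ½ for all i}`, and for each `j` the convex hull of
`{eʲ} ∪ {v^{ij} : i ≠ j}` equals `{x ∈ Δ : xⱼ ≥ ½}`, where `Δ` is the standard simplex. -/
theorem xi_decomposition (n : ℕ) (hn : 3 ≤ n)
    (e : Fin n → (Fin n → ℝ)) (he : ∀ i, e i = fun k => if k = i then 1 else 0)
    (v : Fin n → Fin n → (Fin n → ℝ))
    (hv : ∀ i j, v i j = fun k => if k = i ∨ k = j then (1 : ℝ)/2 else 0) :
    (convexHull ℝ {x | ∃ i j : Fin n, i ≠ j ∧ x = v i j}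
      = {x : Fin n → ℝ | (∀ i, 0 ≤ x i) ∧ (∑ i, x i) = 1 ∧ ∀ i, x i ≤ 1/2}) ∧
    (∀ j : Fin n, convexHull ℝ ({e j} ∪ {x | ∃ i : Fin n, i ≠ j ∧ x = v i j})
      = {x : Fin n → ℝ | (∀ i, 0 ≤ x i) ∧ (∑ i, x i) = 1 ∧ 1/2 ≤ x j}) :=
  xi_decomposition_general n e he v hv
end
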